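/- arXiv:2410.11470 — 7 statements merged into one kernel-verified Lean document; each statement's English description precedes it below -/
import Mathlib

section
/- Let V ⊆ M be finite and nonempty, let λ_1 ≥ 0, and set λ_i := 2^{i-1}·λ_1 for each i ≥ 1. Let I_0 := V and, for each i with 1 ≤ i ≤ τ, let I_i be a maximal λ_i-separated subset of I_{i-1}. Then for every i with 1 ≤ i ≤ τ, cl(I_i, V) ≤ 2λ_i. -/
/-!
Each point of `V = I 0` reaches `I i` by a chain of `i` hops, the `j`-th of length at most
`λ_j = 2^(j-1) λ_1`, so its distance to `I i` is at most `(2^i - 1) λ_1 ≤ 2 λ_i`.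
-/

/-- The k-center objective: `cl S V = max_{x ∈ V} min_{y ∈ S} d(x,y)`
(for finite nonempty `S`, `V`). -/
noncomputable def cl {M : Type*} [MetricSpace M] (S V : Finset M) : ℝ :=
  sSup ((fun x => Metric.infDist x (S : Set M)) '' (V : Set M))

open Finset

theorem cl_le_of_forall_exists_dist_le {M : Type*} [MetricSpace M] {S V : Finset M} {r : ℝ}
    (hr : 0 ≤ r) (h : ∀ x ∈ V, ∃ z ∈ S, dist x z ≤ r) : cl S V ≤ r := by
  refine Real.sSup_le ?_ hr
  rintro _ ⟨x, hx, rfl⟩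
  obtain ⟨z, hz, hxz⟩ := h x hx
  exact (Metric.infDist_le_dist_of_mem hz).trans hxz

theorem exists_dist_le_sum_of_forall_exists_succ {M : Type*} [MetricSpace M] {I : ℕ → Finset M}
    {r : ℕ → ℝ} {τ : ℕ} (hcov : ∀ j < τ, ∀ y ∈ I j, ∃ z ∈ I (j + 1), dist y z ≤ r j) :
    ∀ i ≤ τ, ∀ x ∈ I 0, ∃ z ∈ I i, dist x z ≤ ∑ j ∈ range i, r j := by
  intro i hi x hx
  induction i with
  | zero => exact ⟨x, hx, by simp⟩
  | succ i ih =>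
    obtain ⟨y, hy, hxy⟩ := ih (by omega)
    obtain ⟨z, hz, hyz⟩ := hcov i (by omega) y hy
    refine ⟨z, hz, ?_⟩
    calc dist x z ≤ dist x y + dist y z := dist_triangle x y z
      _ ≤ ∑ j ∈ range (i + 1), r j := by rw [sum_range_succ]; exact add_le_add hxy hyz

theorem stmt_1_general {M : Type*} [MetricSpace M] (V : Finset M)
    (lam1 : ℝ) (hlam1 : 0 ≤ lam1) (τ : ℕ) (I : ℕ → Finset M)
    (hI0 : I 0 = V)
    (hmax : ∀ i, 1 ≤ i → i ≤ τ →
      ∀ y ∈ I (i - 1), ∃ z ∈ I i, dist y z ≤ (2 : ℝ) ^ (i - 1) * lam1) :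
    ∀ i, 1 ≤ i → i ≤ τ → cl (I i) V ≤ 2 * ((2 : ℝ) ^ (i - 1) * lam1) := by
  intro i hi1 hiτ
  have hcov : ∀ j < τ, ∀ y ∈ I j, ∃ z ∈ I (j + 1), dist y z ≤ (2 : ℝ) ^ j * lam1 :=
    fun j hj => hmax (j + 1) (by omega) hj
  have hgeom : ∑ j ∈ range i, (2 : ℝ) ^ j ≤ 2 ^ i := by
    exact_mod_cast (Nat.geomSum_lt le_rfl fun k hk => mem_range.1 hk).le
  refine cl_le_of_forall_exists_dist_le (by positivity) fun x hx => ?_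
  obtain ⟨z, hz, hxz⟩ := exists_dist_le_sum_of_forall_exists_succ hcov i hiτ x (hI0 ▸ hx)
  refine ⟨z, hz, hxz.trans ?_⟩
  calc ∑ j ∈ range i, (2 : ℝ) ^ j * lam1 = (∑ j ∈ range i, (2 : ℝ) ^ j) * lam1 := (sum_mul ..).symm
    _ ≤ 2 ^ i * lam1 := by gcongr
    _ = 2 * (2 ^ (i - 1) * lam1) := by rw [← mul_assoc, ← pow_succ', Nat.sub_add_cancel hi1]

/-- For the chain `I 0 = V` and, for `1 ≤ i ≤ τ`, `I i` a maximal
`λ_i`-separated subset of `I (i-1)` with `λ_i = 2^(i-1) * λ_1`, we have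
`cl(I i, V) ≤ 2 * λ_i` for all `1 ≤ i ≤ τ`. -/
theorem stmt_1 {M : Type*} [MetricSpace M] (V : Finset M) (hV : V.Nonempty)
    (lam1 : ℝ) (hlam1 : 0 ≤ lam1) (τ : ℕ) (I : ℕ → Finset M)
    (hI0 : I 0 = V)
    (hsub : ∀ i, 1 ≤ i → i ≤ τ → I i ⊆ I (i - 1))
    (hsep : ∀ i, 1 ≤ i → i ≤ τ →
      ∀ y ∈ I i, ∀ y' ∈ I i, y ≠ y' → (2 : ℝ) ^ (i - 1) * lam1 < dist y y')
    (hmax : ∀ i, 1 ≤ i → i ≤ τ →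
      ∀ y ∈ I (i - 1), ∃ z ∈ I i, dist y z ≤ (2 : ℝ) ^ (i - 1) * lam1) :
    ∀ i, 1 ≤ i → i ≤ τ → cl (I i) V ≤ 2 * ((2 : ℝ) ^ (i - 1) * lam1) :=
  stmt_1_general V lam1 hlam1 τ I hI0 hmax
end

section
/- Let V ⊆ M be finite and nonempty, let k ≥ 1 be an integer, and let λ > 0. Suppose I ⊆ V satisfies: d(y,y') > λ for all distinct y,y' ∈ I, |I| > k, and cl(I,V) ≤ 2λ. Suppose further that I' ⊆ I is a maximal 2λ-separated subset of I. Then cl(I', V) ≤ 8·OPT_k(V). -/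
/-- The optimal k-center cost:
`OPT k V = min { cl(S,V) : S ⊆ V, S nonempty, |S| ≤ k }`. -/
noncomputable def OPT {M : Type*} [MetricSpace M] (k : ℕ) (V : Finset M) : ℝ :=
  sInf {r : ℝ | ∃ S : Finset M, S ⊆ V ∧ S.Nonempty ∧ S.card ≤ k ∧ r = cl S V}

open Metric

section KCenter

variable {M : Type*} [MetricSpace M]

theorem infDist_le_cl {S V : Finset M} {x : M} (hx : x ∈ V) :
    infDist x (S : Set M) ≤ cl S V :=
  le_csSup ((V.finite_toSet.image _).bddAbove) ⟨x, hx, rfl⟩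

theorem cl_le_of_forall_infDist_le {S V : Finset M} {r : ℝ} (hV : V.Nonempty)
    (h : ∀ x ∈ V, infDist x (S : Set M) ≤ r) : cl S V ≤ r :=
  csSup_le ((Finset.coe_nonempty.mpr hV).image _) (by rintro _ ⟨x, hx, rfl⟩; exact h x hx)

theorem Finset.exists_infDist_eq_dist {S : Finset M} (hS : S.Nonempty) (x : M) :
    ∃ y ∈ S, infDist x (S : Set M) = dist x y :=
  S.finite_toSet.isCompact.exists_infDist_eq_dist (by exact_mod_cast hS) x

theorem cl_le_cl_add_of_forall_exists_dist_le {I I' V : Finset M} {ρ : ℝ}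
    (hV : V.Nonempty) (hI : I.Nonempty) (hcover : ∀ y ∈ I, ∃ z ∈ I', dist y z ≤ ρ) :
    cl I' V ≤ cl I V + ρ := by
  refine cl_le_of_forall_infDist_le hV fun x hx => ?_
  obtain ⟨y, hy, hxy⟩ := I.exists_infDist_eq_dist hI x
  obtain ⟨z, hz, hyz⟩ := hcover y hy
  calc infDist x (I' : Set M) ≤ dist x z := infDist_le_dist_of_mem (by exact_mod_cast hz)
    _ ≤ dist x y + dist y z := dist_triangle x y z
    _ ≤ cl I V + ρ := by rw [← hxy]; exact add_le_add (infDist_le_cl hx) hyz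

/-- Pigeonhole: fewer centers than points of `I` force two points of `I` onto one center. -/
theorem exists_ne_dist_le_two_mul_cl {S I V : Finset M} (hS : S.Nonempty) (hIV : I ⊆ V)
    (hcard : S.card < I.card) : ∃ y ∈ I, ∃ y' ∈ I, y ≠ y' ∧ dist y y' ≤ 2 * cl S V := by
  choose c hcS hc using S.exists_infDist_eq_dist hS
  obtain ⟨y, hy, y', hy', hne, hcc⟩ :=
    Finset.exists_ne_map_eq_of_card_lt_of_maps_to hcard fun x _ => hcS x
  refine ⟨y, hy, y', hy', hne, ?_⟩
  calc dist y y' ≤ dist y (c y) + dist y' (c y') := by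
        rw [hcc]; exact dist_triangle_right y y' (c y')
    _ ≤ cl S V + cl S V := by
        rw [← hc, ← hc]; exact add_le_add (infDist_le_cl (hIV hy)) (infDist_le_cl (hIV hy'))
    _ = 2 * cl S V := (two_mul _).symm

theorem le_OPT_of_forall_le_cl {k : ℕ} {V : Finset M} {r : ℝ} (hV : V.Nonempty) (hk : 1 ≤ k)
    (h : ∀ S ⊆ V, S.Nonempty → S.card ≤ k → r ≤ cl S V) : r ≤ OPT k V := by
  obtain ⟨v, hv⟩ := hV
  refine le_csInf ⟨cl {v} V, {v}, by simpa using hv, Finset.singleton_nonempty v,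
    by simpa using hk, rfl⟩ ?_
  rintro _ ⟨S, hSV, hS, hSk, rfl⟩
  exact h S hSV hS hSk

theorem half_le_OPT_of_separated {k : ℕ} {V I : Finset M} {lam : ℝ} (hV : V.Nonempty)
    (hk : 1 ≤ k) (hIV : I ⊆ V) (hsep : ∀ y ∈ I, ∀ y' ∈ I, y ≠ y' → lam < dist y y')
    (hcard : k < I.card) : lam / 2 ≤ OPT k V := by
  refine le_OPT_of_forall_le_cl hV hk fun S _ hS hSk => ?_
  obtain ⟨y, hy, y', hy', hne, hyy'⟩ :=
    exists_ne_dist_le_two_mul_cl hS hIV (hSk.trans_lt hcard)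
  linarith [hsep y hy y' hy' hne]

end KCenter

theorem stmt_4_general {M : Type*} [MetricSpace M] (V : Finset M) (hV : V.Nonempty)
    (k : ℕ) (hk : 1 ≤ k) (lam : ℝ)
    (I I' : Finset M) (hIV : I ⊆ V)
    (hsepI : ∀ y ∈ I, ∀ y' ∈ I, y ≠ y' → lam < dist y y')
    (hcard : k < I.card)
    (hclI : cl I V ≤ 2 * lam)
    (hmaxI' : ∀ y ∈ I, ∃ z ∈ I', dist y z ≤ 2 * lam) :
    cl I' V ≤ 8 * OPT k V := by
  have hI : I.Nonempty := Finset.card_pos.mp (by omega)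
  have hOPT := half_le_OPT_of_separated hV hk hIV hsepI hcard
  calc cl I' V ≤ cl I V + 2 * lam := cl_le_cl_add_of_forall_exists_dist_le hV hI hmaxI'
    _ ≤ 8 * OPT k V := by linarith

/-- If `I ⊆ V` is λ-separated with `|I| > k` and `cl(I,V) ≤ 2λ`,
and `I' ⊆ I` is a maximal 2λ-separated subset of `I`, then `cl(I',V) ≤ 8 · OPT_k(V)`. -/
theorem stmt_4 {M : Type*} [MetricSpace M] (V : Finset M) (hV : V.Nonempty)
    (k : ℕ) (hk : 1 ≤ k) (lam : ℝ) (hlam : 0 < lam)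
    (I I' : Finset M) (hIV : I ⊆ V)
    (hsepI : ∀ y ∈ I, ∀ y' ∈ I, y ≠ y' → lam < dist y y')
    (hcard : k < I.card)
    (hclI : cl I V ≤ 2 * lam)
    (hI'I : I' ⊆ I)
    (hsepI' : ∀ y ∈ I', ∀ y' ∈ I', y ≠ y' → 2 * lam < dist y y')
    (hmaxI' : ∀ y ∈ I, ∃ z ∈ I', dist y z ≤ 2 * lam) :
    cl I' V ≤ 8 * OPT k V :=
  stmt_4_general V hV k hk lam I I' hIV hsepI hcard hclI hmaxI'
end

section
/- Let V ⊆ M be finite and nonempty, let k ≥ 1 be an integer, let a, b ≥ 0 be reals, and let S ⊆ U ⊆ V with S nonempty and |S| ≤ k. Suppose cl(U,V) ≤ a·OPT_k(V) and cl(S,U) ≤ b·OPT_k(U). Then cl(S,V) ≤ (a + 2b)·OPT_k(V). -/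
open Metric Finset

section KCenter

variable {M : Type*} [MetricSpace M] {S T U V : Finset M}

lemma le_cl {x : M} (hx : x ∈ V) : infDist x (S : Set M) ≤ cl S V :=
  le_csSup ((V.finite_toSet.image _).bddAbove) (Set.mem_image_of_mem _ hx)

lemma cl_le {r : ℝ} (hr : 0 ≤ r) (h : ∀ x ∈ V, infDist x (S : Set M) ≤ r) : cl S V ≤ r :=
  Real.sSup_le (Set.forall_mem_image.2 h) hr

lemma cl_nonneg : 0 ≤ cl S V :=
  Real.sSup_nonneg (Set.forall_mem_image.2 fun _ _ => infDist_nonneg)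

lemma exists_mem_dist_le_cl (hS : S.Nonempty) {x : M} (hx : x ∈ V) :
    ∃ y ∈ S, dist x y ≤ cl S V := by
  obtain ⟨y, hy, hxy⟩ :=
    S.finite_toSet.isCompact.exists_infDist_eq_dist (coe_nonempty.2 hS) x
  exact ⟨y, hy, hxy ▸ le_cl hx⟩

lemma cl_le_cl_add_cl (hU : U.Nonempty) : cl S V ≤ cl U V + cl S U := by
  refine cl_le (add_nonneg cl_nonneg cl_nonneg) fun x hx => ?_
  obtain ⟨u, hu, hxu⟩ := exists_mem_dist_le_cl hU hx
  calc infDist x (S : Set M) ≤ infDist u (S : Set M) + dist x u := infDist_le_infDist_add_dist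
    _ ≤ cl S U + cl U V := add_le_add (le_cl hu) hxu
    _ = cl U V + cl S U := add_comm _ _

lemma exists_subset_card_le_cl_le_two_mul (hU : U.Nonempty) (hUV : U ⊆ V) (hT : T.Nonempty) :
    ∃ T' ⊆ U, T'.Nonempty ∧ T'.card ≤ T.card ∧ cl T' U ≤ 2 * cl T V := by
  classical
  set r := cl T V
  have hnear : ∀ u ∈ U, ∃ t ∈ T, dist u t ≤ r := fun u hu => exists_mem_dist_le_cl hT (hUV hu)
  set C := T.filter fun t => ∃ u ∈ U, dist u t ≤ r
  have hmemC : ∀ u ∈ U, ∀ t ∈ T, dist u t ≤ r → t ∈ C :=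
    fun u hu t ht hut => mem_filter.2 ⟨ht, u, hu, hut⟩
  choose! rep hrepU hrep using fun t (ht : t ∈ C) => (mem_filter.1 ht).2
  refine ⟨C.image rep, image_subset_iff.2 hrepU, ?_, card_image_le.trans (card_filter_le _ _), ?_⟩
  · obtain ⟨u, hu⟩ := hU
    obtain ⟨t, ht, hut⟩ := hnear u hu
    exact ⟨rep t, mem_image_of_mem rep (hmemC u hu t ht hut)⟩
  refine cl_le (mul_nonneg zero_le_two cl_nonneg) fun u hu => ?_
  obtain ⟨t, ht, hut⟩ := hnear u hu
  have htC := hmemC u hu t ht hut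
  calc infDist u (C.image rep : Set M)
      ≤ dist u (rep t) := infDist_le_dist_of_mem (by simpa using mem_image_of_mem rep htC)
    _ ≤ dist u t + dist (rep t) t := dist_triangle_right _ _ _
    _ ≤ r + r := add_le_add hut (hrep t htC)
    _ = 2 * r := (two_mul r).symm

lemma OPT_le_two_mul_OPT {k : ℕ} (hk : 1 ≤ k) (hU : U.Nonempty) (hUV : U ⊆ V) :
    OPT k U ≤ 2 * OPT k V := by
  obtain ⟨u, hu⟩ := hU
  have hfeasible : {r : ℝ | ∃ T, T ⊆ V ∧ T.Nonempty ∧ T.card ≤ k ∧ r = cl T V}.Nonempty :=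
    ⟨_, {u}, singleton_subset_iff.2 (hUV hu), singleton_nonempty u, by simpa using hk, rfl⟩
  suffices OPT k U / 2 ≤ OPT k V by linarith
  refine le_csInf hfeasible ?_
  rintro _ ⟨T, -, hT, hTk, rfl⟩
  obtain ⟨T', hT'U, hT', hT'T, hcl⟩ := exists_subset_card_le_cl_le_two_mul ⟨u, hu⟩ hUV hT
  have : OPT k U ≤ cl T' U :=
    csInf_le ⟨0, by rintro _ ⟨_, -, -, -, rfl⟩; exact cl_nonneg⟩
      ⟨T', hT'U, hT', hT'T.trans hTk, rfl⟩
  linarith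

end KCenter

theorem stmt_7_general {M : Type*} [MetricSpace M] (V : Finset M)
    (k : ℕ) (hk : 1 ≤ k) (a b : ℝ) (hb : 0 ≤ b)
    (U S : Finset M) (hS : S.Nonempty) (hSU : S ⊆ U) (hUV : U ⊆ V)
    (hU : cl U V ≤ a * OPT k V)
    (hSap : cl S U ≤ b * OPT k U) :
    cl S V ≤ (a + 2 * b) * OPT k V := by
  have hUne : U.Nonempty := hS.mono hSU
  calc cl S V ≤ cl U V + cl S U := cl_le_cl_add_cl hUne
    _ ≤ a * OPT k V + b * (2 * OPT k V) :=
        add_le_add hU (hSap.trans (mul_le_mul_of_nonneg_left (OPT_le_two_mul_OPT hk hUne hUV) hb))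
    _ = (a + 2 * b) * OPT k V := by ring

/-- Composing an `a`-approximate sparsifier `U` with a `b`-approximate
solution `S` computed on `U` gives an `(a + 2b)`-approximate solution on `V`. -/
theorem stmt_7 {M : Type*} [MetricSpace M] (V : Finset M) (hV : V.Nonempty)
    (k : ℕ) (hk : 1 ≤ k) (a b : ℝ) (ha : 0 ≤ a) (hb : 0 ≤ b)
    (U S : Finset M) (hS : S.Nonempty) (hSU : S ⊆ U) (hUV : U ⊆ V)
    (hScard : S.card ≤ k)
    (hU : cl U V ≤ a * OPT k V)
    (hSap : cl S U ≤ b * OPT k U) :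
    cl S V ≤ (a + 2 * b) * OPT k V :=
  stmt_7_general V k hk a b hb U S hS hSU hUV hU hSap
end

section
/- Let W, W' ⊆ M be finite sets with |W ⊕ W'| ≤ |W|/4, where ⊕ denotes symmetric difference, and let k ≥ 1 be an integer. Then μ_k^{1/2}(W') ≤ μ_k^1(W). -/
/-!
Intersecting a cover of all of `W` by `k` disjoint sets of diameter `≤ μ` with `W'` loses only
points of `W \ W'`, so it still covers `|W| - |W \ W'|` points of `W'`. Since
`|W \ W'| + |W' \ W| ≤ |W| / 4` and `|W'| ≤ |W| + |W' \ W|`, this is at least `|W'| / 2`.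
-/

/-- `mu k β W` is the least `μ ≥ 0` for which there exist pairwise disjoint subsets
`C 1, …, C k ⊆ W` with `Σ |C i| ≥ β·|W|` and `diam (C i) ≤ μ` for every `i`. -/
noncomputable def mu {M : Type*} [MetricSpace M] (k : ℕ) (β : ℝ) (W : Finset M) : ℝ :=
  sInf {μ : ℝ | 0 ≤ μ ∧ ∃ C : Fin k → Finset M,
    (∀ i, C i ⊆ W) ∧ (∀ i j, i ≠ j → Disjoint (C i) (C j)) ∧
    β * (W.card : ℝ) ≤ ∑ i, ((C i).card : ℝ) ∧
    ∀ i, Metric.diam ((C i : Finset M) : Set M) ≤ μ}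

open Finset

lemma Finset.card_symmDiff {α : Type*} [DecidableEq α] (s t : Finset α) :
    #(symmDiff s t) = #(s \ t) + #(t \ s) :=
  card_union_of_disjoint disjoint_sdiff_sdiff

lemma Finset.sum_card_le_sum_card_inter_add_card_sdiff {ι α : Type*} [DecidableEq α]
    {s : Finset ι} {C : ι → Finset α} {W W' : Finset α} (hCW : ∀ i ∈ s, C i ⊆ W)
    (hC : (s : Set ι).PairwiseDisjoint C) :
    ∑ i ∈ s, #(C i) ≤ ∑ i ∈ s, #(C i ∩ W') + #(W \ W') := by
  have hsdiff : ∑ i ∈ s, #(C i \ W') ≤ #(W \ W') := by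
    rw [← card_biUnion (hC.mono fun i => sdiff_subset)]
    exact card_le_card <| biUnion_subset.2 fun i hi => sdiff_subset_sdiff (hCW i hi) le_rfl
  calc ∑ i ∈ s, #(C i) = ∑ i ∈ s, #(C i ∩ W') + ∑ i ∈ s, #(C i \ W') := by
        rw [← sum_add_distrib]; exact sum_congr rfl fun i _ => (card_inter_add_card_sdiff _ _).symm
    _ ≤ _ := by gcongr

lemma Finset.card_div_two_le_card_sub_card_sdiff {α : Type*} [DecidableEq α] {W W' : Finset α}
    (h : (#(symmDiff W W') : ℝ) ≤ #W / 4) : (#W' : ℝ) / 2 ≤ #W - #(W \ W') := by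
  have hsymm : (#(symmDiff W W') : ℝ) = #(W \ W') + #(W' \ W) := by
    exact_mod_cast card_symmDiff W W'
  have hW' : (#W' : ℝ) ≤ #(W' \ W) + #W := by exact_mod_cast card_le_card_sdiff_add_card
  linarith

section
variable {M : Type*} [MetricSpace M]

def muSet (k : ℕ) (β : ℝ) (W : Finset M) : Set ℝ :=
  {μ : ℝ | 0 ≤ μ ∧ ∃ C : Fin k → Finset M,
    (∀ i, C i ⊆ W) ∧ (∀ i j, i ≠ j → Disjoint (C i) (C j)) ∧
    β * (W.card : ℝ) ≤ ∑ i, ((C i).card : ℝ) ∧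
    ∀ i, Metric.diam ((C i : Finset M) : Set M) ≤ μ}

lemma mu_eq_sInf_muSet (k : ℕ) (β : ℝ) (W : Finset M) : mu k β W = sInf (muSet k β W) := rfl

lemma bddBelow_muSet (k : ℕ) (β : ℝ) (W : Finset M) : BddBelow (muSet k β W) :=
  ⟨0, fun _ hμ => hμ.1⟩

lemma nonempty_muSet {k : ℕ} (hk : 1 ≤ k) {β : ℝ} (hβ : β ≤ 1) (W : Finset M) :
    (muSet k β W).Nonempty := by
  let i₀ : Fin k := ⟨0, hk⟩
  refine ⟨Metric.diam (W : Set M), Metric.diam_nonneg, fun i => if i = i₀ then W else ∅,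
    fun i => ?_, fun i j hij => ?_, ?_, fun i => ?_⟩
  · dsimp only; split_ifs <;> simp
  · dsimp only; split_ifs with hi hj <;> simp_all
  · simp only [apply_ite Finset.card, apply_ite Nat.cast, card_empty, Nat.cast_zero,
      sum_ite_eq', mem_univ, if_true]
    exact mul_le_of_le_one_left (Nat.cast_nonneg _) hβ
  · dsimp only; split_ifs
    · exact le_rfl
    · simpa using Metric.diam_nonneg

lemma muSet_subset_muSet {k : ℕ} {β β' : ℝ} [DecidableEq M] {W W' : Finset M}
    (h : β' * #W' ≤ β * #W - #(W \ W')) : muSet k β W ⊆ muSet k β' W' := by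
  rintro μ ⟨hμ, C, hCW, hC, hcard, hdiam⟩
  refine ⟨hμ, fun i => C i ∩ W', fun i => inter_subset_right,
    fun i j hij => (hC i j hij).mono inter_subset_left inter_subset_left, ?_,
    fun i => (Metric.diam_mono (by simp) (finite_toSet _).isBounded).trans (hdiam i)⟩
  have hloss : ∑ i, (#(C i) : ℝ) ≤ ∑ i, (#(C i ∩ W') : ℝ) + #(W \ W') := by
    exact_mod_cast sum_card_le_sum_card_inter_add_card_sdiff (s := univ) (W' := W')
      (fun i _ => hCW i) (fun i _ j _ hij => hC i j hij)
  dsimp only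
  linarith

end

/-- If `|W ⊕ W'| ≤ |W|/4` (symmetric difference),
then `μ_k^{1/2}(W') ≤ μ_k^1(W)`. -/
theorem stmt_11 {M : Type*} [MetricSpace M] [DecidableEq M] (W W' : Finset M)
    (h : ((symmDiff W W').card : ℝ) ≤ (W.card : ℝ) / 4)
    (k : ℕ) (hk : 1 ≤ k) :
    mu k (1 / 2) W' ≤ mu k 1 W := by
  have hcard := card_div_two_le_card_sub_card_sdiff h
  rw [mu_eq_sInf_muSet, mu_eq_sInf_muSet]
  exact csInf_le_csInf (bddBelow_muSet k _ W') (nonempty_muSet hk le_rfl W)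
    (muSet_subset_muSet (by linarith))
end

section
/- Let k ≥ 1 be an integer and let α_1, …, α_k be reals with 0 ≤ α_i ≤ 1 for every i and Σ_{i=1}^k α_i ≥ 1/2. Then Σ_{i=1}^k α_i·(1 − (1 − α_i)^{2k}) ≥ (1 − e^{−1})/2, where e is Euler's number. -/
/-!
Since `1 - x ≤ exp (-x)`, each term satisfies `n x (1 - x)^n ≤ n x exp (-n x) ≤ e⁻¹`, so with
`n = 2k` the `k` defect terms `α_i (1 - α_i)^{2k}` add up to at most `e⁻¹ / 2`, and the sum is at
least `Σ α_i - e⁻¹ / 2 ≥ (1 - e⁻¹) / 2`.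
-/

open Real Finset

lemma one_sub_pow_le_exp_neg_mul {x : ℝ} (hx1 : x ≤ 1) (n : ℕ) :
    (1 - x) ^ n ≤ exp (-(n * x)) :=
  calc (1 - x) ^ n ≤ exp (-x) ^ n :=
        pow_le_pow_left₀ (by linarith) (one_sub_le_exp_neg x) n
    _ = exp (-(n * x)) := by rw [← exp_nat_mul, mul_neg]

lemma natCast_mul_mul_one_sub_pow_le_exp_neg_one {x : ℝ} (hx0 : 0 ≤ x) (hx1 : x ≤ 1) (n : ℕ) :
    n * x * (1 - x) ^ n ≤ exp (-1) :=
  calc n * x * (1 - x) ^ n ≤ n * x * exp (-(n * x)) := by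
        gcongr
        exact one_sub_pow_le_exp_neg_mul hx1 n
    _ ≤ exp (-1) := mul_exp_neg_le_exp_neg_one _

/-- For reals `0 ≤ α_i ≤ 1` with `Σ α_i ≥ 1/2`,
`Σ α_i · (1 − (1 − α_i)^{2k}) ≥ (1 − e⁻¹)/2`. -/
theorem stmt_13 (k : ℕ) (hk : 1 ≤ k) (α : Fin k → ℝ)
    (h0 : ∀ i, 0 ≤ α i) (h1 : ∀ i, α i ≤ 1)
    (hsum : (1 : ℝ) / 2 ≤ ∑ i, α i) :
    (1 - Real.exp (-1)) / 2 ≤ ∑ i, α i * (1 - (1 - α i) ^ (2 * k)) := by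
  have hdefect : (k : ℝ) * (2 * ∑ i, α i * (1 - α i) ^ (2 * k)) ≤ k * exp (-1) :=
    calc (k : ℝ) * (2 * ∑ i, α i * (1 - α i) ^ (2 * k))
        = ∑ i, ((2 * k : ℕ) : ℝ) * α i * (1 - α i) ^ (2 * k) := by
          rw [mul_sum, mul_sum]; push_cast; ring_nf
      _ ≤ ∑ _i : Fin k, exp (-1) :=
          sum_le_sum fun i _ => natCast_mul_mul_one_sub_pow_le_exp_neg_one (h0 i) (h1 i) _
      _ = k * exp (-1) := by simp
  have hexpand : ∑ i, α i * (1 - (1 - α i) ^ (2 * k)) =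
      ∑ i, α i - ∑ i, α i * (1 - α i) ^ (2 * k) := by
    rw [← sum_sub_distrib]; simp only [mul_sub, mul_one]
  rw [hexpand]
  linarith [le_of_mul_le_mul_left hdefect (by exact_mod_cast hk)]
end

section
/- Let W ⊆ M be finite and nonempty, let μ ≥ 0, let k ≥ 1 and s ≥ 1 be integers, and let C_1, …, C_k ⊆ W be pairwise disjoint subsets with diam(C_i) ≤ μ for every i. Let Y_1, …, Y_s be independent random points, each uniformly distributed on W, and let N := |{x ∈ W : min_{1 ≤ j ≤ s} d(x, Y_j) ≤ μ}|. Then E[N] ≥ Σ_{i=1}^k |C_i|·(1 − (1 − α_i)^s), where α_i := |C_i|/|W|. -/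
/-!
A sample `ω : Fin s → W` misses `C i` exactly when it lies in the box `(W \ C i) ^ s`, so `C i`
is hit by `#W ^ s - (#W - #(C i)) ^ s` of the `#W ^ s` samples. If `ω` hits `C i`, every point of
`C i` is within `μ` of it since `diam (C i) ≤ μ`; the `C i` being disjoint, the number of points
covered by `ω` is at least the sum of `#(C i)` over the `C i` it hits. Summing over all samples and
exchanging the sums gives the bound.
-/

open Finset Function

theorem card_filter_exists_add_card_filter_not_pow {α ι : Type*} [Fintype α] [Fintype ι]
    [DecidableEq ι] (p : α → Prop) [DecidablePred p]
    [DecidablePred fun ω : ι → α ↦ ∃ j, p (ω j)] :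
    #{ω : ι → α | ∃ j, p (ω j)} + #{a | ¬p a} ^ Fintype.card ι
      = Fintype.card α ^ Fintype.card ι := by
  have hmiss :
      ({ω : ι → α | ¬∃ j, p (ω j)} : Finset _) = Fintype.piFinset fun _ ↦ {a | ¬p a} := by
    ext ω; simp
  have := card_filter_add_card_filter_not (s := (univ : Finset (ι → α))) fun ω ↦ ∃ j, p (ω j)
  rwa [hmiss, Fintype.card_piFinset, prod_const, card_univ, card_univ, Fintype.card_fun] at this

theorem card_filter_coe_notMem_eq_card_sub {M : Type*} [DecidableEq M] {W C : Finset M}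
    (hCW : C ⊆ W) :
    #{a : W | (a : M) ∉ C} = #W - #C := by
  rw [univ_eq_attach, filter_attach (· ∉ C), card_map, card_attach, filter_not, filter_mem_eq_inter,
    inter_eq_right.2 hCW, card_sdiff_of_subset hCW]

theorem card_filter_exists_coe_mem {M ι : Type*} [DecidableEq M] [Fintype ι] [DecidableEq ι]
    {W C : Finset M} (hCW : C ⊆ W) [DecidablePred fun ω : ι → W ↦ ∃ j, (ω j : M) ∈ C] :
    (#{ω : ι → W | ∃ j, (ω j : M) ∈ C} : ℝ)
      = #W ^ Fintype.card ι - (#W - #C : ℝ) ^ Fintype.card ι := by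
  have h := card_filter_exists_add_card_filter_not_pow (α := W) (ι := ι) fun a ↦ (a : M) ∈ C
  rw [card_filter_coe_notMem_eq_card_sub hCW, Fintype.card_coe] at h
  rw [eq_sub_iff_add_eq, ← Nat.cast_sub (card_le_card hCW)]
  exact_mod_cast h

theorem sum_mul_card_filter_eq_sum_sum_filter {α β R : Type*} [Fintype α] [Fintype β]
    [CommSemiring R] (c : α → R) (P : α → β → Prop) [∀ a b, Decidable (P a b)] :
    ∑ a, c a * #{b | P a b} = ∑ b, ∑ a with P a b, c a := by
  simp only [card_filter, Nat.cast_sum, Nat.cast_ite, Nat.cast_one, Nat.cast_zero, mul_sum, mul_ite,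
    mul_one, mul_zero, sum_filter]
  exact sum_comm

theorem one_sub_one_sub_div_pow {K : Type*} [Field K] {n : K} (hn : n ≠ 0) (c : K) (s : ℕ) :
    1 - (1 - c / n) ^ s = (n ^ s - (n - c) ^ s) / n ^ s := by
  rw [sub_div, div_self (pow_ne_zero s hn), ← div_pow, sub_div, div_self hn]

theorem sum_card_filter_exists_mem_le {M ι κ : Type*} [PseudoMetricSpace M] [DecidableEq M]
    [Fintype ι] [Fintype κ] {W : Finset M} {μ : ℝ} {C : κ → Finset M} (hCW : ∀ i, C i ⊆ W)
    (hdisj : Pairwise (Disjoint on C)) (hdiam : ∀ i, Metric.diam (C i : Set M) ≤ μ) (y : ι → M)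
    [DecidablePred fun i ↦ ∃ j, y j ∈ C i] [DecidablePred fun x ↦ ∃ j, dist x (y j) ≤ μ] :
    ∑ i with ∃ j, y j ∈ C i, #(C i) ≤ #{x ∈ W | ∃ j, dist x (y j) ≤ μ} := by
  rw [← card_biUnion fun i _ i' _ hii' ↦ hdisj hii']
  refine card_le_card fun x hx ↦ ?_
  obtain ⟨i, hi, hxi⟩ := mem_biUnion.1 hx
  obtain ⟨j, hj⟩ := (mem_filter.1 hi).2
  exact mem_filter.2 ⟨hCW i hxi, j, (Metric.dist_le_diam_of_mem (C i).finite_toSet.isBounded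
    hxi hj).trans (hdiam i)⟩

theorem stmt_15_general {M : Type*} [MetricSpace M] (W : Finset M) (hW : W.Nonempty)
    (μ : ℝ) (k s : ℕ)
    (C : Fin k → Finset M) (hCW : ∀ i, C i ⊆ W)
    (hdisj : ∀ i j, i ≠ j → Disjoint (C i) (C j))
    (hdiam : ∀ i, Metric.diam ((C i : Finset M) : Set M) ≤ μ) :
    ∑ i, ((C i).card : ℝ) * (1 - (1 - ((C i).card : ℝ) / (W.card : ℝ)) ^ s)
      ≤ (∑ ω : Fin s → {x // x ∈ W},
          ((W.filter (fun x => ∃ j, dist x (ω j : M) ≤ μ)).card : ℝ))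
        / (W.card : ℝ) ^ s := by
  classical
  have hn : (#W : ℝ) ≠ 0 := by exact_mod_cast hW.card_pos.ne'
  calc ∑ i, (#(C i) : ℝ) * (1 - (1 - #(C i) / #W) ^ s)
      = (∑ i, (#(C i) : ℝ) * #{ω : Fin s → W | ∃ j, (ω j : M) ∈ C i}) / #W ^ s := by
        rw [sum_div]
        refine sum_congr rfl fun i _ ↦ ?_
        rw [mul_div_assoc, one_sub_one_sub_div_pow hn, card_filter_exists_coe_mem (hCW i),
          Fintype.card_fin]
    _ = (∑ ω : Fin s → W, ∑ i with ∃ j, (ω j : M) ∈ C i, (#(C i) : ℝ)) / #W ^ s := by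
        rw [sum_mul_card_filter_eq_sum_sum_filter]
    _ ≤ _ := by
        gcongr with ω
        exact_mod_cast
          sum_card_filter_exists_mem_le hCW (fun i j ↦ hdisj i j) hdiam fun j ↦ (ω j : M)

/-- For i.i.d. uniform samples `Y_1, …, Y_s` from `W` (equivalently, a
uniform sample from `W^s`), the expected number of points of `W` within distance `μ` of
the sample set is at least `Σ_i |C_i|·(1 − (1 − α_i)^s)` where `α_i = |C_i|/|W|`, whenever
the `C_i ⊆ W` are pairwise disjoint with `diam(C_i) ≤ μ`. -/
theorem stmt_15 {M : Type*} [MetricSpace M] (W : Finset M) (hW : W.Nonempty)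
    (μ : ℝ) (hμ : 0 ≤ μ) (k s : ℕ) (hk : 1 ≤ k) (hs : 1 ≤ s)
    (C : Fin k → Finset M) (hCW : ∀ i, C i ⊆ W)
    (hdisj : ∀ i j, i ≠ j → Disjoint (C i) (C j))
    (hdiam : ∀ i, Metric.diam ((C i : Finset M) : Set M) ≤ μ) :
    ∑ i, ((C i).card : ℝ) * (1 - (1 - ((C i).card : ℝ) / (W.card : ℝ)) ^ s)
      ≤ (∑ ω : Fin s → {x // x ∈ W},
          ((W.filter (fun x => ∃ j, dist x (ω j : M) ≤ μ)).card : ℝ))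
        / (W.card : ℝ) ^ s :=
  stmt_15_general W hW μ k s C hCW hdisj hdiam
end

section
/- Let W ⊆ M be finite and nonempty, let k ≥ 1 be an integer, and let μ* := μ_k^{1/2}(W). Let Y_1, …, Y_{2k} be independent random points, each uniformly distributed on W, and let N := |{x ∈ W : min_{1 ≤ j ≤ 2k} d(x, Y_j) ≤ μ*}|. Then P(N ≥ |W|/4) ≥ (1 − 2e^{−1})/3, where e is Euler's number. -/
/-!
Since `W` is finite, the infimum defining `μ* = mu k (1/2) W` is attained: there are disjoint
clusters `C₁, …, C_k ⊆ W` of diameter at most `μ*` and total size at least `|W|/2`. If a sample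
point falls in `Cᵢ`, every point of `Cᵢ` is within `μ*` of the sample, so the number `N` of
covered points dominates the total size `X` of the clusters hit by the sample, while `X ≤ |W|`.
A cluster of size `c` is missed by all `2k` samples with probability `(1 - c/|W|)^{2k}`, and
`2k · p (1 - p)^{2k} ≤ e⁻¹`; hence `E X ≥ |W|/2 - |W|/(2e)`. As `X ≤ |W|` always and `X < |W|/4`
whenever `N < |W|/4`, this forces `P(N ≥ |W|/4) ≥ (1 - 2e⁻¹)/3`.
-/

open Finset Real Function

lemma natCast_mul_mul_one_sub_pow_le {p : ℝ} (hp0 : 0 ≤ p) (hp1 : p ≤ 1) (m : ℕ) :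
    m * p * (1 - p) ^ m ≤ exp (-1) :=
  calc m * p * (1 - p) ^ m ≤ m * p * exp (-p) ^ m := by
        gcongr
        linarith [add_one_le_exp (-p)]
    _ = m * p * exp (-(m * p)) := by rw [← exp_nat_mul]; ring_nf
    _ ≤ exp (-1) := mul_exp_neg_le_exp_neg_one _

lemma natCast_mul_mul_sub_pow_le {c n : ℝ} (hc : 0 ≤ c) (hcn : c ≤ n) (m : ℕ) :
    m * c * (n - c) ^ m ≤ n ^ (m + 1) * exp (-1) := by
  obtain rfl | hn := (hc.trans hcn).eq_or_lt
  · obtain rfl : c = 0 := le_antisymm hcn hc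
    simp
  obtain ⟨p, rfl⟩ : ∃ p, c = n * p := ⟨c / n, by field_simp⟩
  have key := natCast_mul_mul_one_sub_pow_le (nonneg_of_mul_nonneg_right hc hn)
    ((mul_le_iff_le_one_right hn).1 hcn) m
  calc m * (n * p) * (n - n * p) ^ m = n ^ (m + 1) * (m * p * (1 - p) ^ m) := by
        rw [← mul_one_sub, mul_pow]
        ring
    _ ≤ n ^ (m + 1) * exp (-1) := by gcongr

lemma sum_le_card_filter_mul_add {Ω : Type*} [Fintype Ω] (f : Ω → ℝ) (P : Ω → Prop)
    [DecidablePred P] {a b : ℝ} (hb : ∀ ω, P ω → f ω ≤ b) (ha : ∀ ω, ¬ P ω → f ω ≤ a) :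
    ∑ ω, f ω ≤ #{ω | P ω} * b + (Fintype.card Ω - #{ω | P ω}) * a := by
  have hcompl : (#{ω | ¬ P ω} : ℝ) = Fintype.card Ω - #{ω | P ω} := by
    rw [eq_sub_iff_add_eq', ← Nat.cast_add, card_filter_add_card_filter_not, card_univ]
  rw [← sum_filter_add_sum_filter_not univ P, ← hcompl]
  gcongr
  · simpa using sum_le_card_nsmul _ f b fun ω hω => hb ω (mem_filter.1 hω).2
  · simpa using sum_le_card_nsmul _ f a fun ω hω => ha ω (mem_filter.1 hω).2

lemma card_filter_forall_apply {α : Type*} [Fintype α] (m : ℕ) (p : α → Prop) [DecidablePred p] :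
    #{ω : Fin m → α | ∀ j, p (ω j)} = #{a | p a} ^ m := by
  have : ({ω : Fin m → α | ∀ j, p (ω j)} : Finset _) = Fintype.piFinset fun _ => {a | p a} := by
    ext; simp
  rw [this, Fintype.card_piFinset, prod_const, card_univ, Fintype.card_fin]

lemma sum_sum_filter_exists_apply {α κ : Type*} [Fintype α] [Fintype κ] (m : ℕ)
    (hit : κ → α → Prop) [∀ i, DecidablePred (hit i)] (w : κ → ℝ) :
    ∑ ω : Fin m → α, ∑ i with ∃ j, hit i (ω j), w i
      = ∑ i, w i * (Fintype.card α ^ m - #{a | ¬ hit i a} ^ m) := by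
  simp_rw [sum_filter]
  rw [sum_comm]
  refine sum_congr rfl fun i _ => ?_
  rw [← sum_filter, sum_const, nsmul_eq_mul, mul_comm]
  congr 1
  have hsplit := card_filter_add_card_filter_not (s := (univ : Finset (Fin m → α)))
    (fun ω => ∃ j, hit i (ω j))
  simp only [not_exists, card_univ, Fintype.card_fun, Fintype.card_fin] at hsplit
  rw [card_filter_forall_apply m (fun a => ¬ hit i a)] at hsplit
  rw [eq_sub_iff_add_eq]
  exact_mod_cast hsplit

section Clusters

variable {M : Type*}

lemma sum_card_le_card_of_pairwiseDisjoint {κ : Type*} {C : κ → Finset M} {s : Finset κ}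
    {T : Finset M} (hdisj : Pairwise (Disjoint on C)) (hsub : ∀ i ∈ s, C i ⊆ T) :
    ∑ i ∈ s, #(C i) ≤ #T := by
  classical
  rw [← card_biUnion (hdisj.set_pairwise _)]
  exact card_le_card (biUnion_subset.2 hsub)

lemma exists_clusters_of_le_one {k : ℕ} (hk : 1 ≤ k) {β : ℝ} (hβ : β ≤ 1) (W : Finset M) :
    ∃ C : Fin k → Finset M, (∀ i, C i ⊆ W) ∧ (∀ i j, i ≠ j → Disjoint (C i) (C j)) ∧
      β * #W ≤ ∑ i, (#(C i) : ℝ) := by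
  classical
  refine ⟨fun i => if i = ⟨0, hk⟩ then W else ∅, fun i => ?_, fun i j hij => ?_, ?_⟩
  · dsimp only
    split_ifs <;> simp
  · dsimp only
    split_ifs with hi hj <;> simp_all
  · simpa [apply_ite Finset.card] using mul_le_of_le_one_left (by positivity) hβ

lemma exists_clusters_diam_le_mu [MetricSpace M] {k : ℕ} {β : ℝ} {W : Finset M}
    (h : ∃ C : Fin k → Finset M, (∀ i, C i ⊆ W) ∧ (∀ i j, i ≠ j → Disjoint (C i) (C j)) ∧
      β * #W ≤ ∑ i, (#(C i) : ℝ)) :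
    ∃ C : Fin k → Finset M, (∀ i, C i ⊆ W) ∧ (∀ i j, i ≠ j → Disjoint (C i) (C j)) ∧
      β * #W ≤ ∑ i, (#(C i) : ℝ) ∧ ∀ i, Metric.diam (C i : Set M) ≤ mu k β W := by
  set F : Set (Fin k → Finset M) := {C | (∀ i, C i ⊆ W) ∧
    (∀ i j, i ≠ j → Disjoint (C i) (C j)) ∧ β * #W ≤ ∑ i, (#(C i) : ℝ)}
  have hF : F.Finite := (Set.Finite.pi fun _ => W.powerset.finite_toSet).subset
    fun C hC i _ => mem_powerset.2 (hC.1 i)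
  set S := {μ : ℝ | 0 ≤ μ ∧ ∃ C : Fin k → Finset M, (∀ i, C i ⊆ W) ∧
    (∀ i j, i ≠ j → Disjoint (C i) (C j)) ∧ β * #W ≤ ∑ i, (#(C i) : ℝ) ∧
    ∀ i, Metric.diam (C i : Set M) ≤ μ}
  -- `S` is a finite union of closed half-lines, so it contains its infimum.
  have hS : S = Set.Ici 0 ∩ ⋃ C ∈ F, ⋂ i, Set.Ici (Metric.diam (C i : Set M)) := by
    ext μ
    simp [S, F, and_assoc]
  have hclosed : IsClosed S := hS ▸ isClosed_Ici.inter
    (hF.isClosed_biUnion fun _ _ => isClosed_iInter fun _ => isClosed_Ici)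
  obtain ⟨C, hC⟩ := h
  have hne : S.Nonempty := ⟨∑ i, Metric.diam (C i : Set M),
    sum_nonneg fun _ _ => Metric.diam_nonneg, C, hC.1, hC.2.1, hC.2.2,
    fun i => single_le_sum (f := fun i => Metric.diam (C i : Set M))
      (fun _ _ => Metric.diam_nonneg) (mem_univ i)⟩
  exact (hclosed.csInf_mem hne ⟨0, fun _ hμ => hμ.1⟩).2

lemma card_filter_val_notMem [DecidableEq M] {W C : Finset M} (hC : C ⊆ W) :
    (#{a : W | (a : M) ∉ C} : ℝ) = #W - #C := by
  have hmem : #{a : W | (a : M) ∈ C} = #C := by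
    rw [← card_map (Embedding.subtype _)]
    congr 1
    ext x
    simpa using fun hx => hC hx
  rw [eq_sub_iff_add_eq', ← hmem, ← Nat.cast_add, card_filter_add_card_filter_not, card_univ,
    Fintype.card_coe]

end Clusters

section HitMass

variable {M κ : Type*} [DecidableEq M] [Fintype κ] {W : Finset M} {C : κ → Finset M} {m : ℕ}

def hitMass (C : κ → Finset M) (ω : Fin m → W) : ℝ :=
  ∑ i with ∃ j, (ω j : M) ∈ C i, (#(C i) : ℝ)

lemma hitMass_le_card (hCW : ∀ i, C i ⊆ W) (hdisj : Pairwise (Disjoint on C))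
    (ω : Fin m → W) : hitMass C ω ≤ #W := by
  unfold hitMass
  exact_mod_cast sum_card_le_card_of_pairwiseDisjoint hdisj fun i _ => hCW i

lemma hitMass_le_card_filter_dist_le [MetricSpace M] {μ : ℝ} (hCW : ∀ i, C i ⊆ W)
    (hdisj : Pairwise (Disjoint on C)) (hdiam : ∀ i, Metric.diam (C i : Set M) ≤ μ)
    (ω : Fin m → W) [DecidablePred fun x => ∃ j, dist x (ω j : M) ≤ μ] :
    hitMass C ω ≤ #{x ∈ W | ∃ j, dist x (ω j : M) ≤ μ} := by
  unfold hitMass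
  refine mod_cast sum_card_le_card_of_pairwiseDisjoint hdisj fun i hi x hx => ?_
  obtain ⟨j, hj⟩ := (mem_filter.1 hi).2
  refine mem_filter.2 ⟨hCW i hx, j, (Metric.dist_le_diam_of_mem ?_ hx hj).trans (hdiam i)⟩
  exact (C i).finite_toSet.isBounded

lemma natCast_mul_sub_sum_hitMass_le (hCW : ∀ i, C i ⊆ W) :
    m * (#W ^ m * ∑ i, (#(C i) : ℝ) - ∑ ω : Fin m → W, hitMass C ω)
      ≤ Fintype.card κ * (#W ^ (m + 1) * exp (-1)) := by
  have hsum : ∑ ω : Fin m → W, hitMass C ω = ∑ i, (#(C i) : ℝ) * (#W ^ m - (#W - #(C i)) ^ m) := by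
    unfold hitMass
    rw [sum_sum_filter_exists_apply m (fun i (a : W) => (a : M) ∈ C i)]
    simp only [Fintype.card_coe, card_filter_val_notMem (hCW _)]
  calc m * (#W ^ m * ∑ i, (#(C i) : ℝ) - ∑ ω : Fin m → W, hitMass C ω)
      = ∑ i, m * #(C i) * (#W - #(C i) : ℝ) ^ m := by
        rw [hsum, mul_sum, ← sum_sub_distrib, mul_sum]
        exact sum_congr rfl fun i _ => by ring
    _ ≤ ∑ _ : κ, #W ^ (m + 1) * exp (-1) := sum_le_sum fun i _ =>
        natCast_mul_mul_sub_pow_le (Nat.cast_nonneg _) (mod_cast card_le_card (hCW i)) m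
    _ = Fintype.card κ * (#W ^ (m + 1) * exp (-1)) := by
        rw [sum_const, card_univ, nsmul_eq_mul]

end HitMass

/-- AlmostCover: Sampling `2k` points i.i.d. uniformly from `W`
(equivalently, a uniform sample from `W^{2k}`), with probability at least
`(1 − 2e⁻¹)/3` at least a quarter of the points of `W` lie within distance
`μ* = μ_k^{1/2}(W)` of the sample set. -/
theorem stmt_16 {M : Type*} [MetricSpace M] (W : Finset M) (hW : W.Nonempty)
    (k : ℕ) (hk : 1 ≤ k) :
    (1 - 2 * Real.exp (-1)) / 3 ≤
      (((Finset.univ : Finset (Fin (2 * k) → {x // x ∈ W})).filter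
          (fun ω => (W.card : ℝ) / 4 ≤
            ((W.filter (fun x => ∃ j, dist x (ω j : M) ≤ mu k (1 / 2) W)).card : ℝ))).card : ℝ)
        / (W.card : ℝ) ^ (2 * k) := by
  classical
  obtain ⟨C, hCW, hdisj, hhalf, hdiam⟩ :=
    exists_clusters_diam_le_mu (exists_clusters_of_le_one hk (by norm_num : (1 / 2 : ℝ) ≤ 1) W)
  have hn : (0 : ℝ) < #W := mod_cast hW.card_pos
  have hk_pos : (0 : ℝ) < k := mod_cast hk
  have hmean := natCast_mul_sub_sum_hitMass_le (m := 2 * k) hCW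
  have hmarkov := sum_le_card_filter_mul_add (hitMass (m := 2 * k) C)
    (fun ω => (#W : ℝ) / 4 ≤ #{x ∈ W | ∃ j, dist x (ω j : M) ≤ mu k (1 / 2) W})
    (fun ω _ => hitMass_le_card hCW hdisj ω)
    fun ω h => (hitMass_le_card_filter_dist_le hCW hdisj hdiam ω).trans (not_le.1 h).le
  simp only [Fintype.card_fun, Fintype.card_coe, Fintype.card_fin, Nat.cast_pow, Nat.cast_mul,
    Nat.cast_ofNat, pow_succ] at hmean hmarkov
  have hmean' : 2 * (#W ^ (2 * k) * ∑ i, (#(C i) : ℝ) - ∑ ω, hitMass C ω)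
      ≤ #W ^ (2 * k) * #W * exp (-1) :=
    le_of_mul_le_mul_left (by linarith) hk_pos
  rw [le_div_iff₀ (by positivity)]
  refine le_of_mul_le_mul_right ?_ hn
  linarith [mul_le_mul_of_nonneg_left hhalf (by positivity : (0 : ℝ) ≤ #W ^ (2 * k))]
end
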